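/- (Theorem 2, realization claim.) Let n ≥ 1, let ξ_1, …, ξ_n be pairwise distinct complex numbers, let w_1, …, w_n ∈ ℂ be nonzero, and let data h_k ∈ ℂ (k = 1,…,n) and h_{k,ℓ} ∈ ℂ (k, ℓ = 1,…,n) be given. Then there exist an n × n complex matrix A, vectors b, c ∈ ℂⁿ, and an n × n complex matrix M — i.e., a linear system with quadratic output ẋ = Ax + bu, y = cᵀx + xᵀMx — such that: (i) for every s ∈ ℂ with sI_n − A invertible and D(s) ≠ 0, cᵀ(sI_n − A)⁻¹ b = N(s)/D(s) = r₁(s); and (ii) for all s, z ∈ ℂ with sI_n − A and zI_n − A invertible and D(s) ≠ 0, D(z) ≠ 0, ((sI_n − A)⁻¹ b)ᵀ M ((zI_n − A)⁻¹ b) = N₂(s,z)/(D(s)D(z)) = r₂(s,z). In other words, there exists a linear-quadratic-output model whose first (linear) transfer function is the barycentric interpolant r₁ and whose second (quadratic) transfer function is the two-variable barycentric-like interpolant r₂. -/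

import Mathlib

open Matrix Finset

/-!
The realization is `A = diag(ξ) - w 𝟙ᵀ`, `b = w`, `c = h`, `M = (h_{k,ℓ})`. Since
`(s - ξ_i) P_i(s) = P(s)`, the vector `v(s) = (w_k P_k(s))_k` satisfies
`(sI - A) v(s) = (P(s) + Σ_k w_k P_k(s)) w = D(s) w`, so `(sI - A)⁻¹ b = v(s) / D(s)`; both
transfer functions then expand to the cleared-denominator barycentric forms.
-/

section Barycentric

variable {K ι : Type*} [Field K] [DecidableEq ι]

def barycentricStateMatrix (ξ w : ι → K) : Matrix ι ι K :=
  diagonal ξ - vecMulVec w 1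

theorem smul_one_sub_barycentricStateMatrix (ξ w : ι → K) (s : K) :
    s • 1 - barycentricStateMatrix ξ w =
      diagonal (fun k => s - ξ k) + vecMulVec w 1 := by
  rw [barycentricStateMatrix, ← sub_add, smul_one_eq_diagonal, diagonal_sub]

variable [Fintype ι]

def weightedNodeProducts (ξ w : ι → K) (s : K) : ι → K :=
  fun k => w k * ∏ j ∈ univ.erase k, (s - ξ j)

def barycentricDenominator (ξ w : ι → K) (s : K) : K :=
  (∏ k, (s - ξ k)) + ∑ k, w k * ∏ j ∈ univ.erase k, (s - ξ j)

theorem sub_barycentricStateMatrix_mulVec (ξ w : ι → K) (s : K) :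
    (s • 1 - barycentricStateMatrix ξ w) *ᵥ weightedNodeProducts ξ w s =
      barycentricDenominator ξ w s • w := by
  ext i
  have hprod : (s - ξ i) * ∏ j ∈ univ.erase i, (s - ξ j) = ∏ j, (s - ξ j) :=
    mul_prod_erase univ (fun j => s - ξ j) (mem_univ i)
  simp only [smul_one_sub_barycentricStateMatrix, add_mulVec, vecMulVec_mulVec, Pi.add_apply,
    mulVec_diagonal, Pi.smul_apply, op_smul_eq_mul, smul_eq_mul, barycentricDenominator,
    weightedNodeProducts, one_dotProduct]
  rw [← hprod]
  ring

theorem resolvent_mulVec_weights (ξ w : ι → K) {s : K}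
    (hs : IsUnit (s • 1 - barycentricStateMatrix ξ w)) (hD : barycentricDenominator ξ w s ≠ 0) :
    (s • 1 - barycentricStateMatrix ξ w)⁻¹ *ᵥ w =
      (barycentricDenominator ξ w s)⁻¹ • weightedNodeProducts ξ w s := by
  let := hs.invertible
  refine inv_mulVec_eq_vec ?_
  rw [mulVec_smul, sub_barycentricStateMatrix_mulVec, smul_smul, inv_mul_cancel₀ hD, one_smul]

end Barycentric

theorem lqo_realization_general (n : ℕ)
    (ξ w : Fin n → ℂ)
    (h : Fin n → ℂ) (h2 : Fin n → Fin n → ℂ) :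
    ∃ (A : Matrix (Fin n) (Fin n) ℂ) (b c : Fin n → ℂ)
      (M : Matrix (Fin n) (Fin n) ℂ),
      (∀ s : ℂ, IsUnit (s • (1 : Matrix (Fin n) (Fin n) ℂ) - A) →
        ((∏ k, (s - ξ k)) + ∑ k, w k * ∏ j ∈ univ.erase k, (s - ξ j)) ≠ 0 →
        c ⬝ᵥ ((s • (1 : Matrix (Fin n) (Fin n) ℂ) - A)⁻¹ *ᵥ b) =
          (∑ k, w k * h k * ∏ j ∈ univ.erase k, (s - ξ j)) /
            ((∏ k, (s - ξ k)) + ∑ k, w k * ∏ j ∈ univ.erase k, (s - ξ j))) ∧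
      (∀ s z : ℂ, IsUnit (s • (1 : Matrix (Fin n) (Fin n) ℂ) - A) →
        IsUnit (z • (1 : Matrix (Fin n) (Fin n) ℂ) - A) →
        ((∏ k, (s - ξ k)) + ∑ k, w k * ∏ j ∈ univ.erase k, (s - ξ j)) ≠ 0 →
        ((∏ k, (z - ξ k)) + ∑ k, w k * ∏ j ∈ univ.erase k, (z - ξ j)) ≠ 0 →
        ((s • (1 : Matrix (Fin n) (Fin n) ℂ) - A)⁻¹ *ᵥ b) ⬝ᵥ
            (M *ᵥ ((z • (1 : Matrix (Fin n) (Fin n) ℂ) - A)⁻¹ *ᵥ b)) =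
          (∑ k, ∑ l, h2 k l * w k * w l * (∏ j ∈ univ.erase k, (s - ξ j)) *
              (∏ j ∈ univ.erase l, (z - ξ j))) /
            (((∏ k, (s - ξ k)) + ∑ k, w k * ∏ j ∈ univ.erase k, (s - ξ j)) *
              ((∏ k, (z - ξ k)) + ∑ k, w k * ∏ j ∈ univ.erase k, (z - ξ j)))) := by
  refine ⟨barycentricStateMatrix ξ w, w, h, Matrix.of h2, ?_, ?_⟩
  · intro s hs hDs
    rw [resolvent_mulVec_weights ξ w hs hDs, dotProduct_smul, smul_eq_mul, inv_mul_eq_div]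
    simp only [barycentricDenominator, weightedNodeProducts, dotProduct]
    congr 1
    exact sum_congr rfl fun k _ => by ring
  · intro s z hs hz hDs hDz
    rw [resolvent_mulVec_weights ξ w hs hDs, resolvent_mulVec_weights ξ w hz hDz, mulVec_smul,
      smul_dotProduct, dotProduct_smul, smul_eq_mul, smul_eq_mul, ← mul_assoc, ← mul_inv,
      inv_mul_eq_div]
    simp only [barycentricDenominator, weightedNodeProducts, dotProduct, mulVec, of_apply, mul_sum]
    congr 1
    exact sum_congr rfl fun k _ => sum_congr rfl fun l _ => by ring

/-- Theorem 2, realization claim: given pairwise distinct support points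
`ξ_k`, nonzero weights `w_k`, and data `h_k`, `h_{k,ℓ}`, there exists a linear system
with quadratic output `ẋ = Ax + bu, y = cᵀx + xᵀMx` whose linear transfer function
`cᵀ(sIₙ - A)⁻¹b` equals the barycentric interpolant `r₁(s) = N(s)/D(s)` and whose
quadratic transfer function `((sIₙ - A)⁻¹b)ᵀ M ((zIₙ - A)⁻¹b)` equals the two-variable
barycentric-like interpolant `r₂(s,z) = N₂(s,z)/(D(s)D(z))`, where
`N(s) = Σ_k w_k h_k P_k(s)`, `D(s) = P(s) + Σ_k w_k P_k(s)`, and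
`N₂(s,z) = Σ_{k,ℓ} h_{k,ℓ} w_k w_ℓ P_k(s) P_ℓ(z)`. -/
theorem lqo_realization (n : ℕ) (hn : 1 ≤ n)
    (ξ w : Fin n → ℂ) (hξ : Function.Injective ξ) (hw : ∀ k, w k ≠ 0)
    (h : Fin n → ℂ) (h2 : Fin n → Fin n → ℂ) :
    ∃ (A : Matrix (Fin n) (Fin n) ℂ) (b c : Fin n → ℂ)
      (M : Matrix (Fin n) (Fin n) ℂ),
      (∀ s : ℂ, IsUnit (s • (1 : Matrix (Fin n) (Fin n) ℂ) - A) →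
        ((∏ k, (s - ξ k)) + ∑ k, w k * ∏ j ∈ univ.erase k, (s - ξ j)) ≠ 0 →
        c ⬝ᵥ ((s • (1 : Matrix (Fin n) (Fin n) ℂ) - A)⁻¹ *ᵥ b) =
          (∑ k, w k * h k * ∏ j ∈ univ.erase k, (s - ξ j)) /
            ((∏ k, (s - ξ k)) + ∑ k, w k * ∏ j ∈ univ.erase k, (s - ξ j))) ∧
      (∀ s z : ℂ, IsUnit (s • (1 : Matrix (Fin n) (Fin n) ℂ) - A) →
        IsUnit (z • (1 : Matrix (Fin n) (Fin n) ℂ) - A) →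
        ((∏ k, (s - ξ k)) + ∑ k, w k * ∏ j ∈ univ.erase k, (s - ξ j)) ≠ 0 →
        ((∏ k, (z - ξ k)) + ∑ k, w k * ∏ j ∈ univ.erase k, (z - ξ j)) ≠ 0 →
        ((s • (1 : Matrix (Fin n) (Fin n) ℂ) - A)⁻¹ *ᵥ b) ⬝ᵥ
            (M *ᵥ ((z • (1 : Matrix (Fin n) (Fin n) ℂ) - A)⁻¹ *ᵥ b)) =
          (∑ k, ∑ l, h2 k l * w k * w l * (∏ j ∈ univ.erase k, (s - ξ j)) *
              (∏ j ∈ univ.erase l, (z - ξ j))) /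
            (((∏ k, (s - ξ k)) + ∑ k, w k * ∏ j ∈ univ.erase k, (s - ξ j)) *
              ((∏ k, (z - ξ k)) + ∑ k, w k * ∏ j ∈ univ.erase k, (z - ξ j)))) :=
  lqo_realization_general n ξ w h h2
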